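/- Let p be a prime, r a prime dividing p-1, a ∈ 𝔽_p not an r-th power, θ a root of x^r - a, and n with a^n = a in 𝔽_p. Let A = a^(r^(α-1)) be a primitive r-th root of unity in 𝔽_p with A^n = A. If 1 + θ ∈ G_n, then 1 + A^i θ ∈ G_n for all i = 0, 1, …, r-1. -/

import Mathlib

open Polynomial

/-- The set `G_n = { f(θ) ∈ 𝔽_p(θ)^* : f(θ^n) = f(θ)^n }` inside
`𝔽_p(θ) = 𝔽_p[x]/(x^r - a)`. -/
def Gset (p r : ℕ) (a : ZMod p) (m : ℕ) : Set (AdjoinRoot (X ^ r - C a)) :=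
  {u | u ≠ 0 ∧ ∀ f : Polynomial (ZMod p),
    Polynomial.aeval (AdjoinRoot.root (X ^ r - C a)) f = u →
    Polynomial.aeval ((AdjoinRoot.root (X ^ r - C a)) ^ m) f = u ^ m}

/-!
The substitution `θ ↦ ζ θ` with `ζ ^ r = 1` is an automorphism of `K[X]/(X^r - a)`, and it
commutes with `σ_n : θ ↦ θ ^ n` as soon as `ζ ^ n = ζ`. Since `G_n` is cut out by
`u ≠ 0 ∧ σ_n u = u ^ n`, such an automorphism maps `G_n` to itself, and it sends
`1 + θ` to `1 + ζ θ`; take `ζ = A ^ i`.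
-/

namespace AdjoinRoot

variable {K : Type*} [CommRing K] {r : ℕ} {a : K}

theorem root_X_pow_sub_C_pow : root (X ^ r - C a) ^ r = algebraMap K _ a := by
  have h := aeval_eq (f := X ^ r - C a) (X ^ r - C a)
  rwa [mk_self, map_sub, map_pow, aeval_X, aeval_C, sub_eq_zero] at h

theorem aeval_X_pow_sub_C_eq_zero {x : AdjoinRoot (X ^ r - C a)} (hx : x ^ r = algebraMap K _ a) :
    aeval x (X ^ r - C a) = 0 := by
  rw [map_sub, map_pow, aeval_X, aeval_C, hx, sub_self]

noncomputable def scaleRoot (ζ : K) (hζ : ζ ^ r = 1) :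
    AdjoinRoot (X ^ r - C a) →ₐ[K] AdjoinRoot (X ^ r - C a) :=
  liftAlgHom _ (Algebra.ofId _ _) (algebraMap K _ ζ * root _) <| aeval_X_pow_sub_C_eq_zero <| by
    rw [mul_pow, ← map_pow, hζ, map_one, one_mul, root_X_pow_sub_C_pow]

/-- The paper's `σ_n : f(θ) ↦ f(θ ^ n)`. -/
noncomputable def powRoot (n : ℕ) (ha : a ^ n = a) :
    AdjoinRoot (X ^ r - C a) →ₐ[K] AdjoinRoot (X ^ r - C a) :=
  liftAlgHom _ (Algebra.ofId _ _) (root _ ^ n) <| aeval_X_pow_sub_C_eq_zero <| by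
    rw [pow_right_comm, root_X_pow_sub_C_pow, ← map_pow, ha]

@[simp]
theorem scaleRoot_root (ζ : K) (hζ : ζ ^ r = 1) :
    scaleRoot (a := a) ζ hζ (root _) = algebraMap K _ ζ * root _ :=
  liftAlgHom_root ..

@[simp]
theorem powRoot_root (n : ℕ) (ha : a ^ n = a) : powRoot (r := r) n ha (root _) = root _ ^ n :=
  liftAlgHom_root ..

theorem scaleRoot_injective {ζ : K} (hζ : ζ ^ r = 1) (hζu : IsUnit ζ) :
    Function.Injective (scaleRoot (a := a) ζ hζ) := by
  obtain ⟨η, hζη⟩ := hζu.exists_right_inv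
  have hη : η ^ r = 1 := by rw [← one_pow r, ← hζη, mul_pow, hζ, one_mul]
  have hcomp : (scaleRoot η hη).comp (scaleRoot (a := a) ζ hζ) = AlgHom.id K _ :=
    algHom_ext <| by
      rw [AlgHom.comp_apply, scaleRoot_root, map_mul, AlgHom.commutes, scaleRoot_root,
        ← mul_assoc, ← map_mul, hζη, map_one, one_mul, AlgHom.id_apply]
  exact Function.LeftInverse.injective (AlgHom.congr_fun hcomp)

theorem powRoot_comp_scaleRoot {n : ℕ} (ha : a ^ n = a) {ζ : K} (hζ : ζ ^ r = 1)
    (hζn : ζ ^ n = ζ) :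
    (powRoot n ha).comp (scaleRoot ζ hζ) = (scaleRoot ζ hζ).comp (powRoot n ha) :=
  algHom_ext <| by
    rw [AlgHom.comp_apply, AlgHom.comp_apply, scaleRoot_root, map_mul, AlgHom.commutes,
      powRoot_root, map_pow, scaleRoot_root, mul_pow, ← map_pow, hζn]

end AdjoinRoot

open AdjoinRoot

theorem mem_Gset_iff {p r n : ℕ} {a : ZMod p} (ha : a ^ n = a) {u : AdjoinRoot (X ^ r - C a)} :
    u ∈ Gset p r a n ↔ u ≠ 0 ∧ powRoot n ha u = u ^ n := by
  have haeval (f : (ZMod p)[X]) :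
      aeval (root (X ^ r - C a) ^ n) f = powRoot n ha (aeval (root _) f) := by
    rw [← powRoot_root n ha, aeval_algHom_apply]
  refine and_congr_right fun _ => ⟨fun h => ?_, fun h f hf => by rw [haeval, hf, h]⟩
  obtain ⟨f, rfl⟩ := mk_surjective u
  simpa only [haeval, aeval_eq] using h f (aeval_eq f)

theorem scaleRoot_mem_Gset {p r n : ℕ} {a : ZMod p} (ha : a ^ n = a) {ζ : ZMod p}
    (hζ : ζ ^ r = 1) (hζu : IsUnit ζ) (hζn : ζ ^ n = ζ) {u : AdjoinRoot (X ^ r - C a)}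
    (hu : u ∈ Gset p r a n) : scaleRoot ζ hζ u ∈ Gset p r a n := by
  rw [mem_Gset_iff ha] at hu ⊢
  refine ⟨(map_ne_zero_iff _ (scaleRoot_injective hζ hζu)).mpr hu.1, ?_⟩
  rw [← AlgHom.comp_apply, powRoot_comp_scaleRoot ha hζ hζn, AlgHom.comp_apply, hu.2, map_pow]

theorem one_add_Ai_theta_mem_general (p r n : ℕ) (a : ZMod p)
    (han : a ^ n = a) (A : ZMod p) (hA : orderOf A = r) (hAn : A ^ n = A)
    (h : (1 + AdjoinRoot.root (X ^ r - C a)) ∈ Gset p r a n) :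
    ∀ i < r, (1 + algebraMap (ZMod p) (AdjoinRoot (X ^ r - C a)) (A ^ i) *
      AdjoinRoot.root (X ^ r - C a)) ∈ Gset p r a n := by
  intro i hi
  have hAr : A ^ r = 1 := hA ▸ pow_orderOf_eq_one A
  have hζ : (A ^ i) ^ r = 1 := by rw [pow_right_comm, hAr, one_pow]
  have hζn : (A ^ i) ^ n = A ^ i := by rw [pow_right_comm, hAn]
  have hζu : IsUnit (A ^ i) := (IsUnit.of_pow_eq_one hAr (by omega)).pow i
  simpa using scaleRoot_mem_Gset han hζ hζu hζn h

theorem one_add_Ai_theta_mem (p r n : ℕ) [Fact p.Prime] (hr : r.Prime)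
    (hrp : r ∣ p - 1) (a : ZMod p) (ha : ¬ ∃ b : ZMod p, b ^ r = a)
    (han : a ^ n = a) (A : ZMod p) (hA : orderOf A = r) (hAn : A ^ n = A)
    (h : (1 + AdjoinRoot.root (X ^ r - C a)) ∈ Gset p r a n) :
    ∀ i < r, (1 + algebraMap (ZMod p) (AdjoinRoot (X ^ r - C a)) (A ^ i) *
      AdjoinRoot.root (X ^ r - C a)) ∈ Gset p r a n :=
  one_add_Ai_theta_mem_general p r n a han A hA hAn h
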